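/- Discrete Poincaré inequality: Let ζ be a general (ρ_1,ρ_2)-admissible point set, ε > 0, A a bounded Lipschitz open set, and let w be a continuous piecewise-affine function on the Delaunay triangulation of εζ vanishing on the boundary region (w = 0 on all vertices x ∈ εζ not in the interior of the union of Delaunay cells contained in A). Assume each vertex x ∈ closure(A) ∩ εζ is joined to a boundary vertex by a path on the Delaunay graph with O(ε^{-1}) steps, with each edge used by at most O(ε^{-1}) paths. Then Σ_{x ∈ closure(A) ∩ εζ} ε^d |w(x)|^p ≤ C Σ_{edges {x,y} ⊂ closure(A)} ε^d (|w(y) − w(x)|/|y − x|)^p, with C depending on A, d, p, ρ_1, ρ_2 but not on ε. -/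

import Mathlib

open Metric Set MeasureTheory
open scoped BigOperators

noncomputable section

/-- Hard-core condition with parameter `ρ₁`. -/
def HardCore {m : ℕ} (ρ₁ : ℝ) (ζ : Set (EuclideanSpace ℝ (Fin m))) : Prop :=
  ∀ x ∈ ζ, ∀ y ∈ ζ, x ≠ y → ρ₁ ≤ dist x y

/-- Empty-space condition with parameter `ρ₂`. -/
def EmptySpace {m : ℕ} (ρ₂ : ℝ) (ζ : Set (EuclideanSpace ℝ (Fin m))) : Prop :=
  ∀ z : EuclideanSpace ℝ (Fin m), ∃ y ∈ ζ, dist z y < ρ₂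

/-- General position in `ℝ^{d+1}`. -/
def IsGeneral {d : ℕ} (ζ : Set (EuclideanSpace ℝ (Fin (d + 1)))) : Prop :=
  (∀ s : Finset (EuclideanSpace ℝ (Fin (d + 1))), ↑s ⊆ ζ → s.card = d + 2 →
    ¬ ∃ (f : EuclideanSpace ℝ (Fin (d + 1)) →ₗ[ℝ] ℝ) (a : ℝ), f ≠ 0 ∧ ∀ x ∈ s, f x = a) ∧
  (∀ s : Finset (EuclideanSpace ℝ (Fin (d + 1))), ↑s ⊆ ζ → s.card = d + 3 →
    ¬ ∃ (c : EuclideanSpace ℝ (Fin (d + 1))) (r : ℝ), ∀ x ∈ s, dist x c = r)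

/-- A Delaunay simplex of `ζ ⊆ ℝ^{d+1}` given by its vertex set. -/
def IsDSimplex {d : ℕ} (ζ : Set (EuclideanSpace ℝ (Fin (d + 1))))
    (s : Finset (EuclideanSpace ℝ (Fin (d + 1)))) : Prop :=
  ↑s ⊆ ζ ∧ s.card = d + 2 ∧
  ∃ (c : EuclideanSpace ℝ (Fin (d + 1))) (r : ℝ),
    (∀ x ∈ s, dist x c = r) ∧ ∀ z ∈ ζ, r ≤ dist z c

/-- Delaunay neighbour pairs. -/
def IsDEdge {d : ℕ} (ζ : Set (EuclideanSpace ℝ (Fin (d + 1))))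
    (x y : EuclideanSpace ℝ (Fin (d + 1))) : Prop :=
  x ≠ y ∧ ∃ s : Finset (EuclideanSpace ℝ (Fin (d + 1))), IsDSimplex ζ s ∧ x ∈ s ∧ y ∈ s

/-- The rescaled point set `ε ζ`. -/
def scaleSet {m : ℕ} (ε : ℝ) (ζ : Set (EuclideanSpace ℝ (Fin m))) :
    Set (EuclideanSpace ℝ (Fin m)) := (fun x => ε • x) '' ζ

/-- Delaunay edges of `ζ` contained (as segments) in the closure of `A`. -/
def edgeRel {d : ℕ} (ζ A : Set (EuclideanSpace ℝ (Fin (d + 1))))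
    (x y : EuclideanSpace ℝ (Fin (d + 1))) : Prop :=
  IsDEdge ζ x y ∧ segment ℝ x y ⊆ closure A

/-- Vertices of `ζ` lying in `closure A` but not in the interior of the union of the
Delaunay cells contained in `A` ("boundary vertices"). -/
def bdryVerts {d : ℕ} (ζ A : Set (EuclideanSpace ℝ (Fin (d + 1)))) :
    Set (EuclideanSpace ℝ (Fin (d + 1))) :=
  {x ∈ ζ | x ∈ closure A ∧
    x ∉ interior (⋃ s ∈ {s | IsDSimplex ζ s ∧
        convexHull ℝ (↑s : Set (EuclideanSpace ℝ (Fin (d + 1)))) ⊆ A},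
      convexHull ℝ (↑s : Set (EuclideanSpace ℝ (Fin (d + 1)))))}

/-- A bounded measurable set of `ℝ^{d+1}` with Lipschitz boundary. -/
def IsLipschitzSet {d : ℕ} (D : Set (EuclideanSpace ℝ (Fin (d + 1)))) : Prop :=
  Bornology.IsBounded D ∧ MeasurableSet D ∧
  ∃ (m : ℕ) (U : Fin m → Set (EuclideanSpace ℝ (Fin (d + 1)))),
    frontier D ⊆ (⋃ k, U k) ∧
    ∀ k, (∃ V : Set (EuclideanSpace ℝ (Fin (d + 1))), IsOpen V ∧ U k = V ∩ frontier D) ∧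
      ∃ (e : EuclideanSpace ℝ (Fin (d + 1)) ≃ₗᵢ[ℝ] EuclideanSpace ℝ (Fin (d + 1)))
        (L : NNReal) (f : EuclideanSpace ℝ (Fin d) → ℝ),
        LipschitzWith L f ∧
        ∀ x ∈ U k, e x (Fin.last d) =
          f (show EuclideanSpace ℝ (Fin d) from WithLp.toLp 2 fun i : Fin d => e x i.castSucc)

/-! Along the given path from a boundary vertex `y` (where `w y = 0`) to `x`, the triangle
inequality bounds `‖w x‖` by the increments of `w` over the at most `c₁/ε` distinct edges of
the path. A Delaunay edge is no longer than the diameter `2ρ₂ε` of the circumball of its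
simplex, which is empty of points of `εζ`, so Jensen's inequality gives
`‖w x‖^p ≤ (c₁/ε)^(p-1) (2ρ₂ε)^p Σ_edges (|Δw|/|Δx|)^p`. Summing over `x` and exchanging the
sums, every edge is counted at most `c₂/ε` times, and the powers of `ε` cancel. -/

namespace SimpleGraph.Walk

variable {V E : Type*} [SeminormedAddCommGroup E] {G : SimpleGraph V} {u v : V}

theorem sum_map_sub_darts (w : V → E) (p : G.Walk u v) :
    (p.darts.map fun d => w d.snd - w d.fst).sum = w v - w u := by
  induction p with
  | nil => simp
  | cons h p ih => simp [ih]

theorem norm_sub_le_sum_toFinset_darts [DecidableEq V] (w : V → E) (p : G.Walk u v) :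
    ‖w v - w u‖ ≤ ∑ q ∈ (p.darts.map Dart.toProd).toFinset, ‖w q.2 - w q.1‖ := by
  have hnodup : (p.bypass.darts.map Dart.toProd).Nodup :=
    (darts_nodup_of_support_nodup p.bypass_isPath.support_nodup).map fun a b => Dart.ext a b
  have htelescope : ∑ q ∈ (p.bypass.darts.map Dart.toProd).toFinset, (w q.2 - w q.1) =
      w v - w u := by
    rw [List.sum_toFinset _ hnodup, List.map_map]
    exact sum_map_sub_darts w p.bypass
  calc ‖w v - w u‖ ≤ ∑ q ∈ (p.bypass.darts.map Dart.toProd).toFinset, ‖w q.2 - w q.1‖ :=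
        htelescope ▸ norm_sum_le _ _
    _ ≤ ∑ q ∈ (p.darts.map Dart.toProd).toFinset, ‖w q.2 - w q.1‖ := by
        refine Finset.sum_le_sum_of_subset_of_nonneg ?_ fun _ _ _ => norm_nonneg _
        intro q
        simp only [List.mem_toFinset, List.mem_map]
        exact fun ⟨d, hd, hdq⟩ => ⟨d, p.darts_bypass_subset_darts hd, hdq⟩

end SimpleGraph.Walk

open Finset in
theorem Finset.sum_sum_le_mul_sum_of_card_le {ι κ : Type*} [DecidableEq κ] (s : Finset ι)
    (t : Finset κ) (D : ι → Finset κ) (hD : ∀ i ∈ s, D i ⊆ t) (f : κ → ℝ)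
    (hf : ∀ k ∈ t, 0 ≤ f k) (M : ℝ) (hM : ∀ k ∈ t, (#{i ∈ s | k ∈ D i} : ℝ) ≤ M) :
    ∑ i ∈ s, ∑ k ∈ D i, f k ≤ M * ∑ k ∈ t, f k := by
  have hswap : ∑ i ∈ s, ∑ k ∈ D i, f k = ∑ k ∈ t, ∑ i ∈ s with k ∈ D i, f k :=
    sum_comm' fun i k => by
      simp only [mem_filter]
      exact ⟨fun ⟨hi, hk⟩ => ⟨⟨hi, hk⟩, hD i hi hk⟩, fun ⟨⟨hi, hk⟩, _⟩ => ⟨hi, hk⟩⟩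
  rw [hswap, mul_sum]
  refine sum_le_sum fun k hk => ?_
  rw [sum_const, nsmul_eq_mul]
  exact mul_le_mul_of_nonneg_right (hM k hk) (hf k hk)

open Finset in
theorem Real.rpow_le_mul_sum_rpow_of_le_sum {ι : Type*} {s : Finset ι} {f : ι → ℝ}
    {a L p : ℝ} (ha : 0 ≤ a) (hf : ∀ i ∈ s, 0 ≤ f i) (hp : 1 ≤ p) (hs : (#s : ℝ) ≤ L)
    (hle : a ≤ ∑ i ∈ s, f i) : a ^ p ≤ L ^ (p - 1) * ∑ i ∈ s, f i ^ p :=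
  calc a ^ p ≤ (∑ i ∈ s, f i) ^ p := by gcongr
    _ ≤ (#s : ℝ) ^ (p - 1) * ∑ i ∈ s, f i ^ p :=
        Real.rpow_sum_le_const_mul_sum_rpow_of_nonneg s hp hf
    _ ≤ L ^ (p - 1) * ∑ i ∈ s, f i ^ p := by
        gcongr
        exact sum_nonneg fun i hi => Real.rpow_nonneg (hf i hi) p

theorem norm_sub_le_mul_div_norm_sub {X E : Type*} [NormedAddCommGroup X]
    [SeminormedAddCommGroup E] (w : X → E) {a b : X} {h : ℝ} (hab : ‖b - a‖ ≤ h) :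
    ‖w b - w a‖ ≤ h * (‖w b - w a‖ / ‖b - a‖) := by
  rcases eq_or_ne a b with rfl | hne
  · simp
  have hpos : 0 < ‖b - a‖ := norm_pos_iff.2 (sub_ne_zero.2 hne.symm)
  calc ‖w b - w a‖ = ‖b - a‖ * (‖w b - w a‖ / ‖b - a‖) := (mul_div_cancel₀ _ hpos.ne').symm
    _ ≤ h * (‖w b - w a‖ / ‖b - a‖) := by gcongr

section PathPoincare

open Finset

variable {X E : Type*} [SeminormedAddCommGroup E] [DecidableEq X]

theorem exists_finset_edges_of_isChain (G : SimpleGraph X) (w : X → E) (y : X) (l : List X)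
    (hchain : (y :: l).IsChain G.Adj) :
    ∃ D : Finset (X × X), (∀ q ∈ D, G.Adj q.1 q.2 ∧ [q.1, q.2] <:+: y :: l) ∧
      #D ≤ l.length ∧
      ‖w ((y :: l).getLast (List.cons_ne_nil y l)) - w y‖ ≤ ∑ q ∈ D, ‖w q.2 - w q.1‖ := by
  let W := SimpleGraph.Walk.ofSupport (y :: l) (List.cons_ne_nil y l) hchain
  refine ⟨(W.darts.map SimpleGraph.Dart.toProd).toFinset, ?_, ?_,
    W.norm_sub_le_sum_toFinset_darts w⟩
  · intro q hq
    obtain ⟨d, hd, rfl⟩ := List.mem_map.1 (List.mem_toFinset.1 hq)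
    refine ⟨d.adj, ?_⟩
    rw [← SimpleGraph.Walk.support_ofSupport (List.cons_ne_nil y l) hchain]
    exact SimpleGraph.Walk.mem_darts_iff_fst_snd_infix_support.1 hd
  · calc #(W.darts.map SimpleGraph.Dart.toProd).toFinset
        ≤ (W.darts.map SimpleGraph.Dart.toProd).length := List.toFinset_card_le _
      _ = l.length := by
        rw [List.length_map, SimpleGraph.Walk.length_darts, SimpleGraph.Walk.length_ofSupport]
        simp

theorem sum_norm_rpow_le_of_isChain [NormedAddCommGroup X] (G : SimpleGraph X) (w : X → E)
    (S : Finset X) (T : Finset (X × X)) (γ : X → List X) {p L M h : ℝ} (hp : 1 ≤ p) (hL : 0 ≤ L)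
    (hh : 0 ≤ h)
    (hadj : ∀ a b, G.Adj a b → (a, b) ∈ T ∧ ‖b - a‖ ≤ h)
    (hγ : ∀ x ∈ S, ∃ y l, γ x = y :: l ∧ w y = 0 ∧
      (y :: l).getLast (List.cons_ne_nil y l) = x ∧ (γ x).IsChain G.Adj ∧
      ((γ x).length : ℝ) ≤ L)
    (hover : ∀ a b, (#{x ∈ S | [a, b] <:+: γ x} : ℝ) ≤ M) :
    ∑ x ∈ S, ‖w x‖ ^ p ≤
      L ^ (p - 1) * h ^ p * M * ∑ q ∈ T, (‖w q.2 - w q.1‖ / ‖q.2 - q.1‖) ^ p := by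
  set g : X × X → ℝ := fun q => ‖w q.2 - w q.1‖ / ‖q.2 - q.1‖
  have hg : ∀ q, 0 ≤ g q := fun q => by positivity
  have hpath : ∀ x ∈ S, ∃ D : Finset (X × X), D ⊆ T ∧ (∀ q ∈ D, [q.1, q.2] <:+: γ x) ∧
      (#D : ℝ) ≤ L ∧ ‖w x‖ ≤ ∑ q ∈ D, h * g q := by
    intro x hx
    obtain ⟨y, l, hγx, hy, rfl, hchain, hlen⟩ := hγ x hx
    rw [hγx] at hchain hlen ⊢
    obtain ⟨D, hD, hcard, hnorm⟩ := exists_finset_edges_of_isChain G w y l hchain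
    refine ⟨D, fun q hq => (hadj _ _ (hD q hq).1).1, fun q hq => (hD q hq).2, ?_, ?_⟩
    · simp only [List.length_cons, Nat.cast_add, Nat.cast_one] at hlen
      exact (Nat.cast_le.2 hcard).trans (by linarith)
    · rw [hy, sub_zero] at hnorm
      exact hnorm.trans <| sum_le_sum fun q hq =>
        norm_sub_le_mul_div_norm_sub w (hadj _ _ (hD q hq).1).2
  choose! D hDT hDγ hDcard hDnorm using hpath
  have hpoint : ∀ x ∈ S, ‖w x‖ ^ p ≤ L ^ (p - 1) * h ^ p * ∑ q ∈ D x, g q ^ p := by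
    intro x hx
    have := Real.rpow_le_mul_sum_rpow_of_le_sum (norm_nonneg _)
      (fun q _ => mul_nonneg hh (hg q)) hp (hDcard x hx) (hDnorm x hx)
    simpa only [Real.mul_rpow hh (hg _), ← mul_sum, mul_assoc] using this
  have hcount : ∀ q ∈ T, (#{x ∈ S | q ∈ D x} : ℝ) ≤ M := by
    refine fun q _ => le_trans (Nat.cast_le.2 <| card_le_card fun x hx => ?_) (hover q.1 q.2)
    rw [mem_filter] at hx ⊢
    exact ⟨hx.1, hDγ x hx.1 q hx.2⟩
  calc ∑ x ∈ S, ‖w x‖ ^ p ≤ ∑ x ∈ S, L ^ (p - 1) * h ^ p * ∑ q ∈ D x, g q ^ p :=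
        sum_le_sum hpoint
    _ ≤ L ^ (p - 1) * h ^ p * (M * ∑ q ∈ T, g q ^ p) := by
        rw [← mul_sum]
        gcongr
        exact sum_sum_le_mul_sum_of_card_le S T D hDT _ (fun q _ => Real.rpow_nonneg (hg q) p) M
          hcount
    _ = _ := by ring

end PathPoincare

theorem EmptySpace.scaleSet {m : ℕ} {ρ ε : ℝ} {ζ : Set (EuclideanSpace ℝ (Fin m))}
    (hζ : EmptySpace ρ ζ) (hε : 0 < ε) : EmptySpace (ε * ρ) (scaleSet ε ζ) := by
  intro z
  obtain ⟨y, hy, hdist⟩ := hζ (ε⁻¹ • z)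
  refine ⟨ε • y, ⟨y, hy, rfl⟩, ?_⟩
  calc dist z (ε • y) = dist (ε • ε⁻¹ • z) (ε • y) := by rw [smul_inv_smul₀ hε.ne']
    _ = ε * dist (ε⁻¹ • z) y := by rw [dist_smul₀, Real.norm_of_nonneg hε.le]
    _ < ε * ρ := by gcongr

/-- The circumball of a Delaunay simplex contains no point of `ζ` in its interior, so its
radius is below the empty-space radius. -/
theorem IsDEdge.dist_le {d : ℕ} {ρ : ℝ} {ζ : Set (EuclideanSpace ℝ (Fin (d + 1)))}
    {x y : EuclideanSpace ℝ (Fin (d + 1))} (hxy : IsDEdge ζ x y) (hζ : EmptySpace ρ ζ) :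
    dist x y ≤ 2 * ρ := by
  obtain ⟨-, s, ⟨-, -, c, r, hr, hempty⟩, hx, hy⟩ := hxy
  obtain ⟨z, hz, hcz⟩ := hζ c
  have hrρ : r < ρ := (hempty z hz).trans_lt (by rwa [dist_comm])
  calc dist x y ≤ dist x c + dist y c := dist_triangle_right _ _ _
    _ = r + r := by rw [hr x hx, hr y hy]
    _ ≤ 2 * ρ := by linarith

theorem edgeRel_symm {d : ℕ} {ζ A : Set (EuclideanSpace ℝ (Fin (d + 1)))}
    {x y : EuclideanSpace ℝ (Fin (d + 1))} (h : edgeRel ζ A x y) : edgeRel ζ A y x := by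
  obtain ⟨⟨hne, s, hs, hx, hy⟩, hseg⟩ := h
  exact ⟨⟨hne.symm, s, hs, hy, hx⟩, segment_symm ℝ x y ▸ hseg⟩

def delaunayGraph {d : ℕ} (ζ A : Set (EuclideanSpace ℝ (Fin (d + 1)))) :
    SimpleGraph (EuclideanSpace ℝ (Fin (d + 1))) where
  Adj := edgeRel ζ A
  symm := ⟨fun _ _ => edgeRel_symm⟩
  loopless := ⟨fun _ h => h.1.1 rfl⟩

theorem discrete_poincare_general (d n : ℕ) (p ρ₁ ρ₂ c₁ c₂ : ℝ)
    (hp : 1 < p) (h₁ : 0 < ρ₁) (h₁₂ : ρ₁ < ρ₂) (hc₁ : 0 < c₁) (hc₂ : 0 < c₂)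
    (A : Set (EuclideanSpace ℝ (Fin (d + 1)))) :
    ∃ C : ℝ, 0 < C ∧
      ∀ ε : ℝ, 0 < ε →
      ∀ ζ : Set (EuclideanSpace ℝ (Fin (d + 1))),
        HardCore ρ₁ ζ → EmptySpace ρ₂ ζ → IsGeneral ζ →
      ∀ (hV : {x ∈ scaleSet ε ζ | x ∈ closure A}.Finite)
        (hE : {q : EuclideanSpace ℝ (Fin (d + 1)) × EuclideanSpace ℝ (Fin (d + 1)) |
          edgeRel (scaleSet ε ζ) A q.1 q.2}.Finite),
      ∀ w : EuclideanSpace ℝ (Fin (d + 1)) → EuclideanSpace ℝ (Fin n),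
        (∀ x ∈ bdryVerts (scaleSet ε ζ) A, w x = 0) →
      ∀ γ : EuclideanSpace ℝ (Fin (d + 1)) → List (EuclideanSpace ℝ (Fin (d + 1))),
        (∀ x ∈ {x ∈ scaleSet ε ζ | x ∈ closure A}, ∃ y l, γ x = y :: l ∧
          y ∈ bdryVerts (scaleSet ε ζ) A ∧
          (y :: l).getLast (List.cons_ne_nil y l) = x ∧
          List.Chain' (edgeRel (scaleSet ε ζ) A) (γ x) ∧
          ((γ x).length : ℝ) ≤ c₁ / ε) →
        (∀ a b : EuclideanSpace ℝ (Fin (d + 1)),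
          (({x ∈ scaleSet ε ζ | x ∈ closure A ∧ [a, b] <:+: γ x}.ncard : ℝ)) ≤ c₂ / ε) →
        ∑ x ∈ hV.toFinset, ε ^ (d + 1) * ‖w x‖ ^ p ≤
          C * ∑ q ∈ hE.toFinset, ε ^ (d + 1) * (‖w q.2 - w q.1‖ / ‖q.2 - q.1‖) ^ p := by
  have hρ₂ : 0 < ρ₂ := h₁.trans h₁₂
  refine ⟨(2 * ρ₂) ^ p * c₁ ^ (p - 1) * c₂, by positivity, ?_⟩
  intro ε hε ζ _ hempty _ hV hE w hw γ hγ hover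
  have hscale : (c₁ / ε) ^ (p - 1) * (2 * (ε * ρ₂)) ^ p * (c₂ / ε) =
      (2 * ρ₂) ^ p * c₁ ^ (p - 1) * c₂ := by
    rw [Real.div_rpow hc₁.le hε.le, Real.rpow_sub_one hε.ne', mul_left_comm,
      Real.mul_rpow hε.le (by positivity)]
    field_simp
  have hpaths := sum_norm_rpow_le_of_isChain (delaunayGraph (scaleSet ε ζ) A) w hV.toFinset
    hE.toFinset γ (L := c₁ / ε) (M := c₂ / ε) hp.le (by positivity)
    (by positivity : 0 ≤ 2 * (ε * ρ₂))
    (fun a b hab => ⟨hE.mem_toFinset.2 hab, by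
      rw [← dist_eq_norm, dist_comm]; exact hab.1.dist_le (hempty.scaleSet hε)⟩)
    (fun x hx => by
      obtain ⟨y, l, hγx, hy, hlast, hchain, hlen⟩ := hγ x (hV.mem_toFinset.1 hx)
      exact ⟨y, l, hγx, hw y hy, hlast, hchain, hlen⟩)
    (fun a b => by
      rw [← Set.ncard_coe_finset]
      convert hover a b using 4
      ext x
      simp [and_assoc])
  rw [← Finset.mul_sum, ← Finset.mul_sum, ← hscale]
  exact (mul_le_mul_of_nonneg_left hpaths (by positivity)).trans_eq (by ring)

/-- Discrete Poincaré inequality on the Delaunay graph of `εζ` in a bounded Lipschitz open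
set `A`: if `w` vanishes on the boundary vertices, and every vertex in `Ā` is joined to a
boundary vertex by a Delaunay path with at most `c₁/ε` steps such that every edge is used by
at most `c₂/ε` paths, then
`Σ_x ε^{d+1} |w(x)|^p ≤ C Σ_{edges} ε^{d+1} (|w(y)-w(x)|/|y-x|)^p`
with `C` independent of `ε`. -/
theorem discrete_poincare (d n : ℕ) (p ρ₁ ρ₂ c₁ c₂ : ℝ)
    (hp : 1 < p) (h₁ : 0 < ρ₁) (h₁₂ : ρ₁ < ρ₂) (hc₁ : 0 < c₁) (hc₂ : 0 < c₂)
    (A : Set (EuclideanSpace ℝ (Fin (d + 1))))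
    (hAopen : IsOpen A) (hAlip : IsLipschitzSet A) :
    ∃ C : ℝ, 0 < C ∧
      ∀ ε : ℝ, 0 < ε →
      ∀ ζ : Set (EuclideanSpace ℝ (Fin (d + 1))),
        HardCore ρ₁ ζ → EmptySpace ρ₂ ζ → IsGeneral ζ →
      ∀ (hV : {x ∈ scaleSet ε ζ | x ∈ closure A}.Finite)
        (hE : {q : EuclideanSpace ℝ (Fin (d + 1)) × EuclideanSpace ℝ (Fin (d + 1)) |
          edgeRel (scaleSet ε ζ) A q.1 q.2}.Finite),
      ∀ w : EuclideanSpace ℝ (Fin (d + 1)) → EuclideanSpace ℝ (Fin n),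
        (∀ x ∈ bdryVerts (scaleSet ε ζ) A, w x = 0) →
      ∀ γ : EuclideanSpace ℝ (Fin (d + 1)) → List (EuclideanSpace ℝ (Fin (d + 1))),
        (∀ x ∈ {x ∈ scaleSet ε ζ | x ∈ closure A}, ∃ y l, γ x = y :: l ∧
          y ∈ bdryVerts (scaleSet ε ζ) A ∧
          (y :: l).getLast (List.cons_ne_nil y l) = x ∧
          List.Chain' (edgeRel (scaleSet ε ζ) A) (γ x) ∧
          ((γ x).length : ℝ) ≤ c₁ / ε) →
        (∀ a b : EuclideanSpace ℝ (Fin (d + 1)),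
          (({x ∈ scaleSet ε ζ | x ∈ closure A ∧ [a, b] <:+: γ x}.ncard : ℝ)) ≤ c₂ / ε) →
        ∑ x ∈ hV.toFinset, ε ^ (d + 1) * ‖w x‖ ^ p ≤
          C * ∑ q ∈ hE.toFinset, ε ^ (d + 1) * (‖w q.2 - w q.1‖ / ‖q.2 - q.1‖) ^ p :=
  discrete_poincare_general d n p ρ₁ ρ₂ c₁ c₂ hp h₁ h₁₂ hc₁ hc₂ A
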